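/- Let N, r be natural numbers and let S, K be N×N complex matrices. Suppose S = U Σ V* is a reduced singular value decomposition: U and V are N×r complex matrices with orthonormal columns (U*U = I_r and V*V = I_r) and Σ is an r×r diagonal complex matrix all of whose diagonal entries are nonzero. Set Π = U U*. Then for every p ∈ ℂ^N and every σ ∈ ℂ the following are equivalent: (i) Π (K + (1/2) I_N) p = σ (S p), and ⟨q, p⟩ = 0 for every q ∈ ℂ^N with S q = 0; (ii) there exists P ∈ ℂ^r such that p = V P and U* (K + (1/2) I_N) V P = σ (Σ P). (This is the reduction of the constrained generalized eigenvalue problem, Problem IVD, to a well-conditioned r×r generalized eigenvalue problem via the reduced SVD of the discrete single layer matrix.) -/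
import Mathlib


open Matrix

lemma diag_mulVec_eq_zero {r : ℕ} (Sg : Matrix (Fin r) (Fin r) ℂ)
    (hSgDiag : Sg.IsDiag) (hSgNz : ∀ i, Sg i i ≠ 0)
    (x : Fin r → ℂ) (h : Sg.mulVec x = 0) : x = 0 := by
  funext i
  have hi := congrFun h i
  have hsum : Sg.mulVec x i = Sg i i * x i := by
    simp only [mulVec, dotProduct]
    refine Finset.sum_eq_single i (fun j _ hj => ?_) (by simp)
    rw [hSgDiag (Ne.symm hj), zero_mul]
  rw [hsum] at hi
  exact (mul_eq_zero.mp hi).resolve_left (hSgNz i)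

lemma vec_eq_zero_of_star_dot {n : ℕ} (q : Fin n → ℂ)
    (h : dotProduct (star q) q = 0) : q = 0 := by
  have hcast : ((∑ i, Complex.normSq (q i) : ℝ) : ℂ) = dotProduct (star q) q := by
    push_cast
    simp [dotProduct, Complex.normSq_eq_conj_mul_self]
  have hsum : ∑ i, Complex.normSq (q i) = 0 := by
    exact_mod_cast hcast.trans h
  have hall := (Finset.sum_eq_zero_iff_of_nonneg
    (fun i _ => Complex.normSq_nonneg (q i))).mp hsum
  funext i
  exact Complex.normSq_eq_zero.mp (hall i (Finset.mem_univ i))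

/-- Reduction of the constrained generalized eigenvalue problem
(Problem IVD) to an `r × r` generalized eigenvalue problem via the reduced SVD
`S = U Σ Vᴴ` of the discrete single layer matrix, with `Π = U Uᴴ`:
`Π (K + ½ I) p = σ S p` together with `p ⟂ ker S` holds iff
`p = V P` with `Uᴴ (K + ½ I) V P = σ Σ P`. -/
theorem biomod_reduction_equivalence
    (N r : ℕ) (S K : Matrix (Fin N) (Fin N) ℂ)
    (U V : Matrix (Fin N) (Fin r) ℂ) (Sg : Matrix (Fin r) (Fin r) ℂ)
    (hU : Uᴴ * U = 1) (hV : Vᴴ * V = 1)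
    (hSgDiag : Sg.IsDiag) (hSgNz : ∀ i, Sg i i ≠ 0)
    (hS : S = U * Sg * Vᴴ)
    (p : Fin N → ℂ) (σ : ℂ) :
    ((U * Uᴴ).mulVec ((K + (1/2 : ℂ) • (1 : Matrix (Fin N) (Fin N) ℂ)).mulVec p)
        = σ • S.mulVec p ∧
      (∀ q : Fin N → ℂ, S.mulVec q = 0 → dotProduct (star q) p = 0)) ↔
    (∃ P : Fin r → ℂ, p = V.mulVec P ∧
      (Uᴴ * (K + (1/2 : ℂ) • (1 : Matrix (Fin N) (Fin N) ℂ)) * V).mulVec P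
        = σ • Sg.mulVec P) := by
  set A : Matrix (Fin N) (Fin N) ℂ := K + (1/2 : ℂ) • (1 : Matrix (Fin N) (Fin N) ℂ) with hA
  constructor
  · rintro ⟨h1, h2⟩
    -- first show p = V (Vᴴ p) using the orthogonality constraint
    have hp : p = V.mulVec (Vᴴ.mulVec p) := by
      set q := p - V.mulVec (Vᴴ.mulVec p) with hq
      have hVq : Vᴴ.mulVec q = 0 := by
        rw [hq, mulVec_sub, mulVec_mulVec, mulVec_mulVec, hV, Matrix.one_mul, sub_self]
      have hSq : S.mulVec q = 0 := by
        rw [hS, ← mulVec_mulVec, hVq, mulVec_zero]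
      have hqp : dotProduct (star q) p = 0 := h2 q hSq
      have hqVVp : dotProduct (star q) (V.mulVec (Vᴴ.mulVec p)) = 0 := by
        rw [dotProduct_mulVec]
        have hst : star q ᵥ* V = star (Vᴴ.mulVec q) := by
          rw [star_mulVec, conjTranspose_conjTranspose]
        rw [hst, hVq]
        simp
      have hqq : dotProduct (star q) q = 0 := by
        rw [hq, dotProduct_sub, ← hq, hqp, hqVVp, sub_zero]
      have := vec_eq_zero_of_star_dot q hqq
      rw [hq] at this
      exact (sub_eq_zero.mp this)
    refine ⟨Vᴴ.mulVec p, hp, ?_⟩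
    have hVV : (V * Vᴴ).mulVec p = p := by rw [← mulVec_mulVec, ← hp]
    -- apply Uᴴ to h1
    have h3 := congrArg (Uᴴ.mulVec ·) h1
    simp only [mulVec_mulVec, mulVec_smul] at h3
    have hred : Uᴴ * (U * Uᴴ * A) = Uᴴ * A := by
      rw [← Matrix.mul_assoc, ← Matrix.mul_assoc, hU, Matrix.one_mul]
    rw [hred] at h3
    -- h3 : (Uᴴ * A) *ᵥ p = σ • (Uᴴ * S) *ᵥ p
    rw [mulVec_mulVec, mulVec_mulVec, Matrix.mul_assoc (Uᴴ * A) V Vᴴ,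
      ← mulVec_mulVec, hVV, h3]
    have hUS : Uᴴ * S = Sg * Vᴴ := by
      rw [hS, ← Matrix.mul_assoc, ← Matrix.mul_assoc, hU, Matrix.one_mul]
    rw [hUS]
  · rintro ⟨P, hp, hP⟩
    constructor
    · rw [hp, mulVec_mulVec, mulVec_mulVec, mulVec_mulVec]
      have l1 : U * Uᴴ * A * V = U * (Uᴴ * A * V) := by
        simp only [Matrix.mul_assoc]
      have l2 : S * V = U * Sg := by
        rw [hS, Matrix.mul_assoc, hV, Matrix.mul_one]
      rw [l1, l2, ← mulVec_mulVec, hP, mulVec_smul, mulVec_mulVec]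
    · intro q hSq
      have hVq : Vᴴ.mulVec q = 0 := by
        have h4 := congrArg (Uᴴ.mulVec ·) hSq
        simp only [mulVec_mulVec, mulVec_zero] at h4
        rw [hS, ← Matrix.mul_assoc, ← Matrix.mul_assoc, hU, Matrix.one_mul,
          ← mulVec_mulVec] at h4
        exact diag_mulVec_eq_zero Sg hSgDiag hSgNz _ h4
      rw [hp, dotProduct_mulVec]
      have hst : star q ᵥ* V = star (Vᴴ.mulVec q) := by
        rw [star_mulVec, conjTranspose_conjTranspose]
      rw [hst, hVq]
      simp
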